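/- The relation ≤_{J,δ} is a partial order on W^J: it is reflexive, transitive, and antisymmetric (if w ≤_{J,δ} w' and w' ≤_{J,δ} w for w, w' ∈ W^J, then w = w'). -/

import Mathlib

open CoxeterSystem

variable {B : Type*} [Finite B] {W : Type*} [Group W] {M : CoxeterMatrix B}

namespace PartialConjugation

/-- The standard parabolic subgroup `W_J` of `W`, generated by the simple
reflections indexed by `J`. -/
def parab (cs : CoxeterSystem M W) (J : Set B) : Subgroup W :=
  Subgroup.closure (cs.simple '' J)

/-- The simple reflection `s_j` (for `j ∈ J`), viewed as an element of `W_J`. -/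
def sJ (cs : CoxeterSystem M W) (J : Set B) (j : B) (hj : j ∈ J) : parab cs J :=
  ⟨cs.simple j, Subgroup.subset_closure ⟨j, hj, rfl⟩⟩

/-- `w ∈ W^J`: `w` is a minimal length representative of its left coset `w W_J`. -/
def IsMinRep (cs : CoxeterSystem M W) (J : Set B) (w : W) : Prop :=
  ∀ v ∈ parab cs J, cs.length w ≤ cs.length (w * v)

variable (cs : CoxeterSystem M W) (J J' : Set B) (δ : parab cs J ≃* parab cs J')

/-- `δ` carries the set of simple reflections indexed by `J` onto the set of
simple reflections indexed by `J'`. -/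
def MapsSimples : Prop :=
  (∀ j, ∀ hj : j ∈ J, ∃ j' ∈ J', (δ (sJ cs J j hj) : W) = cs.simple j') ∧
  (∀ j' ∈ J', ∃ j, ∃ hj : j ∈ J, (δ (sJ cs J j hj) : W) = cs.simple j')

/-- `K` is a `w`-special subset of `J`. -/
def WSpecial (w : W) (K : Set B) : Prop :=
  K ⊆ J ∧ ∀ k ∈ K, ∃ j, ∃ hjJ : j ∈ J, j ∈ K ∧
    w * cs.simple k * w⁻¹ = (δ (sJ cs J j hjJ) : W)

/-- The set `I(J, w, δ)`: the union of all `w`-special subsets of `J`. -/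
def Iset (w : W) : Set B := ⋃₀ {K | WSpecial cs J J' δ w K}

/-- The set `W_J ·_δ V = {δ(u) v u⁻¹ : u ∈ W_J, v ∈ V}`. -/
def orbSet (V : Set W) : Set W :=
  {x | ∃ u : parab cs J, ∃ v ∈ V, x = (δ u : W) * v * (u : W)⁻¹}

/-- The orbit of `x` under the `δ`-twisted partial conjugation action of `W_J`. -/
def orbitOf (x : W) : Set W := orbSet cs J J' δ {x}

/-- The coset `w W_{I(J,w,δ)}`. -/
def coset (w : W) : Set W :=
  {x | ∃ v ∈ parab cs (Iset cs J J' δ w), x = w * v}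

/-- Elementary step `v →_i v'` of `δ`-twisted conjugation: `v' = δ(s_i) v s_i`
with `i ∈ J` and `ℓ(v') ≤ ℓ(v)`. -/
def StepRel (v v' : W) : Prop :=
  ∃ i, ∃ hi : i ∈ J, v' = (δ (sJ cs J i hi) : W) * v * cs.simple i ∧
    cs.length v' ≤ cs.length v

/-- The relation `v →_{J,δ} v'`. -/
def ToRel : W → W → Prop := Relation.ReflTransGen (StepRel cs J J' δ)

/-- The relation `v ≈_{J,δ} v'`. -/
def Approx (v v' : W) : Prop := ToRel cs J J' δ v v' ∧ ToRel cs J J' δ v' v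

/-- The Bruhat order on `W`. -/
def bruhatLE (cs : CoxeterSystem M W) : W → W → Prop :=
  Relation.ReflTransGen
    (fun a b => ∃ t, cs.IsReflection t ∧ b = a * t ∧ cs.length a < cs.length b)

/-- The set of minimal length elements in the orbit of `x`. -/
def orbMin (x : W) : Set W :=
  {y ∈ orbitOf cs J J' δ x | ∀ z ∈ orbitOf cs J J' δ x, cs.length y ≤ cs.length z}


/-- The relation `w ≤_{J,δ} w'` on `W^J`. -/
def leJδ (w w' : W) : Prop :=
  ∀ v' ∈ orbMin cs J J' δ w', ∃ v ∈ orbMin cs J J' δ w, bruhatLE cs v v'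

/-!
Reflexivity and transitivity are inherited from the Bruhat order. For antisymmetry, pick `v₂`
minimal in the orbit of `w₂`, then `v₁ ≤ v₂` minimal in the orbit of `w₁`, then `u₂ ≤ v₁`
minimal in the orbit of `w₂`. Since `u₂` and `v₂` are both of minimal length in one orbit, the
Bruhat chain `u₂ ≤ v₁ ≤ v₂` is constant, so the two orbits meet.

It remains to see that two elements `w, w'` of `W^J` in one orbit coincide. Write
`w' = δ(u) w u⁻¹`. Since `δ` maps simple reflections to simple reflections, `ℓ(δ u) ≤ ℓ u`, and
lengths add on `W^J × W_J`, so `ℓ w = ℓ w'` and `δ(u) w = w' u` with lengths adding on both sides.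
Peeling simple reflections off `u` from the right, the exchange property moves each of them into
`δ(u)` (it cannot fall into `w`, which has no descent in `J`), until `u = 1` and `w = w'`.
The strong exchange property itself comes from Tits' action of `W` on `W × ZMod 2`, which counts
modulo 2 how often a reflection occurs in the inversion sequence of a word.
-/

section

open List
open scoped Classical

variable {B : Type*} {W : Type*} [Group W] {M : CoxeterMatrix B} (cs : CoxeterSystem M W)

local prefix:100 "s " => cs.simple
local prefix:100 "π " => cs.wordProd
local prefix:100 "ℓ " => cs.length
local prefix:100 "ris " => cs.rightInvSeq

lemma simple_mul_mul_simple_eq_iff (i : B) (t y : W) : s i * t * s i = y ↔ t = s i * y * s i := by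
  constructor <;> rintro rfl <;> simp [mul_assoc]

noncomputable def titsPerm (i : B) : Equiv.Perm (W × ZMod 2) :=
  Function.Involutive.toPerm
    (fun p => (s i * p.1 * s i, p.2 + if p.1 = s i then 1 else 0))
    (by
      rintro ⟨t, ε⟩
      have hfix : s i * t * s i = s i ↔ t = s i := by
        rw [simple_mul_mul_simple_eq_iff, cs.simple_mul_simple_self, one_mul]
      refine Prod.ext (by simp [mul_assoc]) ?_
      by_cases h : t = s i
      · simp [h, add_assoc, CharTwo.add_self_eq_zero]
      · simp only [hfix, h, if_false, add_zero])

lemma titsPerm_apply (i : B) (t : W) (ε : ZMod 2) :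
    titsPerm cs i (t, ε) = (s i * t * s i, ε + if t = s i then 1 else 0) := rfl

lemma titsPerm_mul_pow_apply (i j : B) (n : ℕ) (t : W) (ε : ZMod 2) :
    ((titsPerm cs i * titsPerm cs j) ^ n) (t, ε) =
      ((s i * s j) ^ n * t * ((s i * s j) ^ n)⁻¹,
        ε + ∑ k ∈ Finset.range (2 * n), if t = ((s i * s j) ^ k)⁻¹ * s j then 1 else 0) := by
  set x := s i * s j
  have hx : s j * s i = x⁻¹ := by simp [x]
  have hsx : s j * x = x⁻¹ * s j := by simp [x, ← mul_assoc]
  have hconj : ∀ t, s i * (s j * t * s j) * s i = x * t * x⁻¹ := by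
    intro t
    simp only [← hx, x]
    group
  have hshift : ∀ t k, x * t * x⁻¹ = (x ^ k)⁻¹ * s j ↔ t = (x ^ (k + 2))⁻¹ * s j := by
    intro t k
    have : (x ^ (k + 2))⁻¹ * s j = x⁻¹ * ((x ^ k)⁻¹ * s j) * x := by
      calc (x ^ (k + 2))⁻¹ * s j = x⁻¹ * (x ^ k)⁻¹ * x⁻¹ * s j := by group
      _ = x⁻¹ * ((x ^ k)⁻¹ * s j) * x := by rw [mul_assoc _ x⁻¹, ← hsx]; group
    rw [this]
    constructor
    · intro h; rw [← h]; group
    · rintro rfl; group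
  have hfirst : ∀ t, s j * t * s j = s i ↔ t = (x ^ 1)⁻¹ * s j := by
    intro t
    rw [simple_mul_mul_simple_eq_iff, pow_one, ← hx]
  induction n generalizing t ε with
  | zero => simp
  | succ n ih =>
    rw [pow_succ, Equiv.Perm.mul_apply, Equiv.Perm.mul_apply, titsPerm_apply, titsPerm_apply, ih,
      hconj]
    refine Prod.ext (by group) ?_
    simp only [show 2 * (n + 1) = 2 * n + 1 + 1 by ring, Finset.sum_range_succ', hshift, hfirst,
      pow_zero, inv_one, one_mul]
    ring

lemma isLiftable_titsPerm : M.IsLiftable (titsPerm cs) := by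
  intro i j
  ext ⟨t, ε⟩ : 1
  -- the summands are periodic with period `M i j`, so the sum counts everything twice
  rw [titsPerm_mul_pow_apply, two_mul, Finset.sum_range_add]
  simp [cs.simple_mul_simple_pow, pow_add, CharTwo.add_self_eq_zero]

noncomputable def titsHom : W →* Equiv.Perm (W × ZMod 2) :=
  cs.lift ⟨titsPerm cs, isLiftable_titsPerm cs⟩

lemma titsHom_wordProd (ω : List B) (t : W) (ε : ZMod 2) :
    titsHom cs (π ω) (t, ε) = (π ω * t * (π ω)⁻¹, ε + (ris ω).count t) := by
  induction ω generalizing t ε with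
  | nil => simp
  | cons i ω ih =>
    have hris : ris (i :: ω) = ((π ω)⁻¹ * s i * π ω) :: ris ω := rfl
    rw [cs.wordProd_cons, map_mul, Equiv.Perm.mul_apply, ih, titsHom, cs.lift_apply_simple,
      titsPerm_apply, hris, count_cons]
    refine Prod.ext (by simp [mul_assoc]) ?_
    have : π ω * t * (π ω)⁻¹ = s i ↔ (π ω)⁻¹ * s i * π ω = t := by
      constructor <;> intro h <;> rw [← h] <;> group
    simp [this, add_assoc]

/-- The parity of the number of occurrences of `t` in the right inversion sequence of any
word for `w`. -/
noncomputable def inversionParity (w t : W) : ZMod 2 := (titsHom cs w (t, 0)).2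

lemma inversionParity_wordProd (ω : List B) (t : W) :
    inversionParity cs (π ω) t = (ris ω).count t := by
  simp [inversionParity, titsHom_wordProd]

lemma titsHom_apply (w t : W) (ε : ZMod 2) :
    titsHom cs w (t, ε) = (w * t * w⁻¹, ε + inversionParity cs w t) := by
  obtain ⟨ω, rfl⟩ := cs.wordProd_surjective w
  simp [titsHom_wordProd, inversionParity_wordProd]

lemma inversionParity_mul (x y t : W) :
    inversionParity cs (x * y) t = inversionParity cs y t + inversionParity cs x (y * t * y⁻¹) := by
  have h : titsHom cs (x * y) (t, 0) = titsHom cs x (titsHom cs y (t, 0)) := by rw [map_mul]; rfl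
  rw [titsHom_apply, titsHom_apply, titsHom_apply] at h
  simpa using congrArg Prod.snd h

lemma inversionParity_one (t : W) : inversionParity cs 1 t = 0 := by
  simp [inversionParity]

lemma inversionParity_self {t : W} (ht : cs.IsReflection t) : inversionParity cs t t = 1 := by
  obtain ⟨p, i, rfl⟩ := ht
  have hsimple : inversionParity cs (s i) (s i) = 1 := by
    simpa using inversionParity_wordProd cs [i] (s i)
  have hinv : inversionParity cs p⁻¹ (p * s i * p⁻¹) = inversionParity cs p (s i) := by
    have h := inversionParity_mul cs p⁻¹ p (s i)
    rw [inv_mul_cancel, inversionParity_one, eq_comm, CharTwo.add_eq_zero] at h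
    exact h.symm
  calc inversionParity cs (p * s i * p⁻¹) (p * s i * p⁻¹)
      = inversionParity cs p⁻¹ (p * s i * p⁻¹) + inversionParity cs (p * s i) (s i) := by
        rw [inversionParity_mul, show p⁻¹ * (p * s i * p⁻¹) * p⁻¹⁻¹ = s i by group]
    _ = inversionParity cs p (s i) + (1 + inversionParity cs p (s i)) := by
        rw [hinv, inversionParity_mul, hsimple]; simp
    _ = 1 := by rw [add_comm 1, CharTwo.add_cancel_left]

lemma exists_eraseIdx_of_mem_rightInvSeq {ω : List B} {t : W} (ht : t ∈ ris ω) :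
    ∃ k < ω.length, π ω * t = π (ω.eraseIdx k) := by
  obtain ⟨k, hk, rfl⟩ := List.mem_iff_getElem.mp ht
  refine ⟨k, by simpa using hk, ?_⟩
  rw [← List.getD_eq_getElem _ 1 hk, wordProd_mul_getD_rightInvSeq]

lemma mem_rightInvSeq_of_inversionParity_eq_one {ω : List B} {t : W}
    (h : inversionParity cs (π ω) t = 1) : t ∈ ris ω := by
  rw [inversionParity_wordProd] at h
  refine List.count_pos_iff.mp (Nat.pos_of_ne_zero fun h0 => ?_)
  simp [h0] at h

lemma isRightInversion_of_inversionParity_eq_one {w t : W} (h : inversionParity cs w t = 1) :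
    cs.IsRightInversion w t := by
  obtain ⟨ω, hω, rfl⟩ := cs.exists_isReduced w
  exact cs.isRightInversion_of_mem_rightInvSeq hω (mem_rightInvSeq_of_inversionParity_eq_one cs h)

lemma inversionParity_eq_one_of_isRightInversion {w t : W} (h : cs.IsRightInversion w t) :
    inversionParity cs w t = 1 := by
  by_contra hne
  have h0 : inversionParity cs w t = 0 := (show ∀ a : ZMod 2, a ≠ 1 → a = 0 by decide) _ hne
  have h1 : inversionParity cs (w * t) t = 1 := by
    rw [inversionParity_mul, inversionParity_self cs h.1, h.1.mul_self, one_mul, h.1.inv, h0,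
      add_zero]
  have := (isRightInversion_of_inversionParity_eq_one cs h1).2
  rw [mul_assoc, h.1.mul_self, mul_one] at this
  exact lt_asymm h.2 this

/-- The strong exchange property. -/
theorem exists_eraseIdx_of_isRightInversion {ω : List B} {t : W}
    (h : cs.IsRightInversion (π ω) t) : ∃ k < ω.length, π ω * t = π (ω.eraseIdx k) :=
  exists_eraseIdx_of_mem_rightInvSeq cs
    (mem_rightInvSeq_of_inversionParity_eq_one cs (inversionParity_eq_one_of_isRightInversion cs h))

lemma length_wordProd_eraseIdx_lt {ω : List B} (hω : cs.IsReduced ω) {k : ℕ} (hk : k < ω.length) :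
    ℓ (π (ω.eraseIdx k)) < ℓ (π ω) :=
  calc ℓ (π (ω.eraseIdx k)) ≤ (ω.eraseIdx k).length := cs.length_wordProd_le _
    _ < ω.length := by rw [length_eraseIdx_of_lt hk]; omega
    _ = ℓ (π ω) := (hω.eq cs).symm

lemma exists_eraseIdx_or_isRightInversion_of_isRightInversion_mul {ρ : List B} {y t : W}
    (h : cs.IsRightInversion (π ρ * y) t) :
    (∃ k < ρ.length, π ρ * y * t = π (ρ.eraseIdx k) * y) ∨ cs.IsRightInversion y t := by
  obtain ⟨σ, hσ, rfl⟩ := cs.exists_isReduced y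
  rw [← cs.wordProd_append] at h
  obtain ⟨k, hk, he⟩ := exists_eraseIdx_of_isRightInversion cs h
  rw [cs.wordProd_append] at he
  rcases lt_or_ge k ρ.length with hkρ | hkρ
  · rw [eraseIdx_append_of_lt_length hkρ, cs.wordProd_append] at he
    exact Or.inl ⟨k, hkρ, he⟩
  · rw [eraseIdx_append_of_length_le hkρ, cs.wordProd_append, mul_assoc] at he
    refine Or.inr ⟨h.1, ?_⟩
    rw [mul_left_cancel he]
    exact length_wordProd_eraseIdx_lt cs hσ (by rw [length_append] at hk; omega)

theorem exists_isReduced_sublist (ω : List B) :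
    ∃ ρ, ρ.Sublist ω ∧ cs.IsReduced ρ ∧ π ρ = π ω := by
  induction ω using List.reverseRecOn with
  | nil => exact ⟨[], Sublist.slnil, by simp [CoxeterSystem.IsReduced], rfl⟩
  | append_singleton ω i ih =>
    obtain ⟨ρ, hsub, hρ, hπ⟩ := ih
    have hρi : π (ρ ++ [i]) = π ρ * s i := by simp [cs.wordProd_append]
    rcases cs.length_mul_simple (π ρ) i with hlen | hlen
    · refine ⟨ρ ++ [i], hsub.append (Sublist.refl _), ?_, by simp [cs.wordProd_append, hπ]⟩
      show ℓ (π (ρ ++ [i])) = (ρ ++ [i]).length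
      rw [hρi, hlen, hρ.eq, length_append, length_singleton]
    · obtain ⟨k, hk, he⟩ :=
        exists_eraseIdx_of_isRightInversion cs (ω := ρ) ⟨cs.isReflection_simple i, by omega⟩
      refine ⟨ρ.eraseIdx k, ((eraseIdx_sublist ρ k).trans hsub).trans (sublist_append_left ω [i]),
        ?_, ?_⟩
      · show ℓ (π (ρ.eraseIdx k)) = (ρ.eraseIdx k).length
        rw [← he, length_eraseIdx_of_lt hk, ← hρ.eq]
        omega
      · rw [← he, cs.wordProd_append, hπ, wordProd_singleton]

variable {J : Set B}

lemma simple_mem_parab {j : B} (hj : j ∈ J) : s j ∈ parab cs J :=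
  Subgroup.subset_closure ⟨j, hj, rfl⟩

lemma wordProd_mem_parab {ω : List B} (hω : ∀ i ∈ ω, i ∈ J) : π ω ∈ parab cs J :=
  Subgroup.list_prod_mem _ (by simpa using fun i hi => simple_mem_parab cs (hω i hi))

lemma exists_word_of_mem_parab {u : W} (hu : u ∈ parab cs J) :
    ∃ ω : List B, (∀ i ∈ ω, i ∈ J) ∧ u = π ω := by
  induction hu using Subgroup.closure_induction with
  | mem x hx =>
    obtain ⟨i, hi, rfl⟩ := hx
    exact ⟨[i], by simpa using hi, (cs.wordProd_singleton i).symm⟩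
  | one => exact ⟨[], by simp, by simp⟩
  | mul x y _ _ hx hy =>
    obtain ⟨ω₁, h₁, rfl⟩ := hx
    obtain ⟨ω₂, h₂, rfl⟩ := hy
    exact ⟨ω₁ ++ ω₂, by simpa [or_imp, forall_and] using And.intro h₁ h₂,
      (cs.wordProd_append ω₁ ω₂).symm⟩
  | inv x _ hx =>
    obtain ⟨ω, h, rfl⟩ := hx
    exact ⟨ω.reverse, by simpa using h, (cs.wordProd_reverse ω).symm⟩

lemma exists_isReduced_of_mem_parab {u : W} (hu : u ∈ parab cs J) :
    ∃ ω : List B, (∀ i ∈ ω, i ∈ J) ∧ cs.IsReduced ω ∧ u = π ω := by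
  obtain ⟨ω, hωJ, rfl⟩ := exists_word_of_mem_parab cs hu
  obtain ⟨ρ, hsub, hρ, hπ⟩ := exists_isReduced_sublist cs ω
  exact ⟨ρ, fun i hi => hωJ i (hsub.subset hi), hρ, hπ.symm⟩

theorem IsMinRep.length_mul {w u : W} (hw : IsMinRep cs J w) (hu : u ∈ parab cs J) :
    ℓ (w * u) = ℓ w + ℓ u := by
  obtain ⟨ω, hωJ, hω, rfl⟩ := exists_isReduced_of_mem_parab cs hu
  clear hu
  rw [hω.eq]
  induction ω using List.reverseRecOn with
  | nil => simp
  | append_singleton ω j ih =>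
    have hωJ' : ∀ i ∈ ω, i ∈ J := fun i hi => hωJ i (mem_append_left _ hi)
    have hj : j ∈ J := hωJ j (by simp)
    have hωj : ℓ (π ω * s j) = ω.length + 1 := by simpa [cs.wordProd_append] using hω.eq
    have ih := ih hωJ' (by simpa using hω.take ω.length)
    rw [cs.wordProd_append, wordProd_singleton, ← mul_assoc, length_append, length_singleton]
    rcases cs.length_mul_simple (w * π ω) j with h | h
    · omega
    exfalso
    obtain ⟨ρ, hρ, rfl⟩ := cs.exists_isReduced w
    rcases exists_eraseIdx_or_isRightInversion_of_isRightInversion_mul cs (ρ := ρ) (y := π ω)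
      ⟨cs.isReflection_simple j, by omega⟩ with ⟨k, hk, he⟩ | hinv
    · -- the reflection `π ω * s j * (π ω)⁻¹ ∈ W_J` would shorten `w`
      have hmin := hw _ (mul_mem (mul_mem (wordProd_mem_parab cs hωJ') (simple_mem_parab cs hj))
        (inv_mem (wordProd_mem_parab cs hωJ')))
      have hρ' : π (ρ.eraseIdx k) = π ρ * (π ω * s j * (π ω)⁻¹) := by
        rw [eq_mul_inv_iff_mul_eq.mpr he.symm]; group
      rw [← hρ'] at hmin
      exact absurd hmin (not_le.mpr (length_wordProd_eraseIdx_lt cs hρ hk))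
    · have := hinv.2
      have := cs.length_wordProd_le ω
      omega

theorem IsMinRep.eq_of_mul_eq_mul {w w' a b : W} (hw : IsMinRep cs J w)
    (hw' : IsMinRep cs J w') (hb : b ∈ parab cs J) (h : a * w = w' * b)
    (hadd : ℓ (a * w) = ℓ a + ℓ w) (hlen : ℓ w = ℓ w') : w = w' := by
  obtain ⟨ω, hωJ, hω, rfl⟩ := exists_isReduced_of_mem_parab cs hb
  clear hb
  induction ω using List.reverseRecOn generalizing a with
  | nil =>
    rw [wordProd_nil, mul_one] at h
    rw [h] at hadd
    rwa [(cs.length_eq_zero_iff (w := a)).mp (by omega), one_mul] at h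
  | append_singleton ω j ih =>
    have hωJ' : ∀ i ∈ ω, i ∈ J := fun i hi => hωJ i (mem_append_left _ hi)
    have hj : j ∈ J := hωJ j (by simp)
    have hω' : cs.IsReduced ω := by simpa using hω.take ω.length
    have hπ : π (ω ++ [j]) = π ω * s j := by simp [cs.wordProd_append]
    have hdrop : a * w * s j = w' * π ω := by rw [h, hπ]; simp [mul_assoc]
    have hlen_aw : ℓ (a * w) = ℓ w' + (ω.length + 1) := by
      rw [h, hw'.length_mul cs (wordProd_mem_parab cs hωJ), hω.eq, length_append, length_singleton]
    have hlen_aws : ℓ (a * w * s j) = ℓ w' + ω.length := by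
      rw [hdrop, hw'.length_mul cs (wordProd_mem_parab cs hωJ'), hω'.eq]
    obtain ⟨ρ, hρ, rfl⟩ := cs.exists_isReduced a
    rcases exists_eraseIdx_or_isRightInversion_of_isRightInversion_mul cs (ρ := ρ) (y := w)
      ⟨cs.isReflection_simple j, by omega⟩ with ⟨k, hk, he⟩ | hinv
    · have hshorter := length_wordProd_eraseIdx_lt cs hρ hk
      have hsub := cs.length_mul_le (π (ρ.eraseIdx k)) w
      exact ih (by rw [he] at hlen_aws; omega) hωJ' hω' (he ▸ hdrop)
    · have := hinv.2
      rw [hw.length_mul cs (simple_mem_parab cs hj), cs.length_simple] at this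
      omega

lemma length_map_le (φ : parab cs J →* W) (hφ : ∀ j (hj : j ∈ J), ∃ j', φ (sJ cs J j hj) = s j')
    (u : parab cs J) : ℓ (φ u) ≤ ℓ (u : W) := by
  have key : ∀ ω (hω : ∀ i ∈ ω, i ∈ J), ℓ (φ ⟨π ω, wordProd_mem_parab cs hω⟩) ≤ ω.length := by
    intro ω hω
    induction ω with
    | nil =>
      simp only [wordProd_nil, length_nil, nonpos_iff_eq_zero, cs.length_eq_zero_iff]
      exact map_one φ
    | cons i ω ih =>
      have hi := hω i mem_cons_self
      have hω' : ∀ k ∈ ω, k ∈ J := fun k hk => hω k (mem_cons_of_mem _ hk)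
      obtain ⟨j', hj'⟩ := hφ i hi
      have hsplit : (⟨π (i :: ω), wordProd_mem_parab cs hω⟩ : parab cs J) =
          sJ cs J i hi * ⟨π ω, wordProd_mem_parab cs hω'⟩ := Subtype.ext (cs.wordProd_cons i ω)
      rw [hsplit, map_mul, hj', length_cons]
      have := ih hω'
      have := cs.length_mul_le (s j') (φ ⟨π ω, wordProd_mem_parab cs hω'⟩)
      rw [cs.length_simple] at this
      omega
  obtain ⟨ω, hωJ, hω, hu⟩ := exists_isReduced_of_mem_parab cs u.2
  obtain rfl : u = ⟨π ω, wordProd_mem_parab cs hωJ⟩ := Subtype.ext hu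
  exact (key ω hωJ).trans_eq (hω.eq cs).symm

variable {J' : Set B} {δ : parab cs J ≃* parab cs J'}

lemma MapsSimples.length_apply_le (hδ : MapsSimples cs J J' δ) (u : parab cs J) :
    ℓ (δ u : W) ≤ ℓ (u : W) :=
  length_map_le cs ((parab cs J').subtype.comp δ.toMonoidHom)
    (fun j hj => (hδ.1 j hj).imp fun _ h => h.2) u

lemma mem_orbitOf_iff {x y : W} :
    y ∈ orbitOf cs J J' δ x ↔ ∃ u : parab cs J, y = δ u * x * (u : W)⁻¹ := by
  simp [orbitOf, orbSet]

lemma self_mem_orbitOf (x : W) : x ∈ orbitOf cs J J' δ x :=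
  (mem_orbitOf_iff cs).mpr ⟨1, by simp⟩

lemma mem_orbitOf_comm {x y : W} : y ∈ orbitOf cs J J' δ x ↔ x ∈ orbitOf cs J J' δ y := by
  suffices ∀ x y, y ∈ orbitOf cs J J' δ x → x ∈ orbitOf cs J J' δ y from ⟨this x y, this y x⟩
  intro x y h
  obtain ⟨u, rfl⟩ := (mem_orbitOf_iff cs).mp h
  exact (mem_orbitOf_iff cs).mpr ⟨u⁻¹, by simp [mul_assoc]⟩

lemma mem_orbitOf_trans {x y z : W} (hy : y ∈ orbitOf cs J J' δ x)
    (hz : z ∈ orbitOf cs J J' δ y) : z ∈ orbitOf cs J J' δ x := by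
  obtain ⟨u, rfl⟩ := (mem_orbitOf_iff cs).mp hy
  obtain ⟨v, rfl⟩ := (mem_orbitOf_iff cs).mp hz
  exact (mem_orbitOf_iff cs).mpr ⟨v * u, by simp [mul_assoc]⟩

lemma orbMin_nonempty (x : W) : (orbMin cs J J' δ x).Nonempty :=
  ⟨_, Function.argminOn_mem cs.length _ ⟨x, self_mem_orbitOf cs x⟩,
    fun _ hz => Function.argminOn_le cs.length _ hz⟩

theorem IsMinRep.length_le_of_mem_orbitOf (hδ : MapsSimples cs J J' δ) {w v : W}
    (hw : IsMinRep cs J w) (hv : v ∈ orbitOf cs J J' δ w) : ℓ w ≤ ℓ v := by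
  obtain ⟨u, rfl⟩ := (mem_orbitOf_iff cs).mp hv
  have h₁ := hw.length_mul cs (inv_mem u.2)
  have h₂ := hδ.length_apply_le cs u
  have h₃ := cs.length_le_length_mul_add_left (δ u : W) (w * (u : W)⁻¹)
  rw [cs.length_inv] at h₁
  rw [← mul_assoc] at h₃
  omega

theorem IsMinRep.eq_of_mem_orbitOf (hδ : MapsSimples cs J J' δ) {w w' : W}
    (hw : IsMinRep cs J w) (hw' : IsMinRep cs J w') (h : w' ∈ orbitOf cs J J' δ w) : w = w' := by
  have hlen : ℓ w = ℓ w' := le_antisymm (hw.length_le_of_mem_orbitOf cs hδ h)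
    (hw'.length_le_of_mem_orbitOf cs hδ ((mem_orbitOf_comm cs).mp h))
  obtain ⟨u, hu⟩ := (mem_orbitOf_iff cs).mp h
  have hmul : (δ u : W) * w = w' * u := by rw [hu]; group
  have h₁ := hw'.length_mul cs u.2
  have h₂ := hδ.length_apply_le cs u
  have h₃ := cs.length_mul_le (δ u : W) w
  exact hw.eq_of_mul_eq_mul cs hw' u.2 hmul (by rw [hmul] at h₃ ⊢; omega) hlen

lemma bruhatLE.eq_or_length_lt {x y : W} (h : bruhatLE cs x y) : x = y ∨ ℓ x < ℓ y := by
  induction h with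
  | refl => exact Or.inl rfl
  | tail _ hstep ih =>
    obtain ⟨_, _, _, hlt⟩ := hstep
    exact Or.inr (ih.elim (· ▸ hlt) (·.trans hlt))

lemma leJδ_refl (w : W) : leJδ cs J J' δ w w := fun v hv => ⟨v, hv, .refl⟩

lemma leJδ_trans {w₁ w₂ w₃ : W} (h₁₂ : leJδ cs J J' δ w₁ w₂) (h₂₃ : leJδ cs J J' δ w₂ w₃) :
    leJδ cs J J' δ w₁ w₃ := by
  intro v₃ hv₃
  obtain ⟨v₂, hv₂, h₂⟩ := h₂₃ v₃ hv₃
  obtain ⟨v₁, hv₁, h₁⟩ := h₁₂ v₂ hv₂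
  exact ⟨v₁, hv₁, h₁.trans h₂⟩

theorem leJδ_antisymm (hδ : MapsSimples cs J J' δ) {w₁ w₂ : W} (hw₁ : IsMinRep cs J w₁)
    (hw₂ : IsMinRep cs J w₂) (h₁₂ : leJδ cs J J' δ w₁ w₂) (h₂₁ : leJδ cs J J' δ w₂ w₁) :
    w₁ = w₂ := by
  obtain ⟨v₂, hv₂⟩ := orbMin_nonempty cs w₂
  obtain ⟨v₁, hv₁, hb₁⟩ := h₁₂ v₂ hv₂
  obtain ⟨u₂, hu₂, hb₂⟩ := h₂₁ v₁ hv₁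
  have hmin := hu₂.2 v₂ hv₂.1
  have hmin' := hv₂.2 u₂ hu₂.1
  have huv : u₂ = v₁ := by
    rcases hb₂.eq_or_length_lt cs with h | h
    · exact h
    · rcases hb₁.eq_or_length_lt cs with rfl | h' <;> omega
  subst huv
  exact hw₁.eq_of_mem_orbitOf cs hδ hw₂
    (mem_orbitOf_trans cs hv₁.1 ((mem_orbitOf_comm cs).mp hu₂.1))

end

/-- `≤_{J,δ}` is a partial order on `W^J`: reflexive,
transitive, and antisymmetric. -/
theorem stmt10 (hδ : MapsSimples cs J J' δ) :
    (∀ w : W, IsMinRep cs J w → leJδ cs J J' δ w w) ∧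
    (∀ w₁ w₂ w₃ : W, IsMinRep cs J w₁ → IsMinRep cs J w₂ → IsMinRep cs J w₃ →
      leJδ cs J J' δ w₁ w₂ → leJδ cs J J' δ w₂ w₃ → leJδ cs J J' δ w₁ w₃) ∧
    (∀ w₁ w₂ : W, IsMinRep cs J w₁ → IsMinRep cs J w₂ →
      leJδ cs J J' δ w₁ w₂ → leJδ cs J J' δ w₂ w₁ → w₁ = w₂) :=
  ⟨fun w _ => leJδ_refl cs w,
    fun _ _ _ _ _ _ => leJδ_trans cs,
    fun _ _ hw₁ hw₂ => leJδ_antisymm cs hδ hw₁ hw₂⟩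

end PartialConjugation
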